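/- Let X be a compact topological space, x₁,…,x_n ∈ X, and let V := C(X, ℝ) with the supremum norm and its Borel σ-algebra. Let U be a real inner product space together with an injective linear map ι : U → V and elements φ₁,…,φ_n ∈ U such that (ι u)(x_k) = ⟨u, φ_k⟩_U for all u ∈ U and k, ⟨φ_k, φ_k⟩_U ≤ G_max for all k, and ‖ι u‖_∞ ≤ c ‖u‖_U for some constant c. Let σ : ℝ → ℝ be L-Lipschitz, and let μ_base be a probability measure on ℝ × V with ā := ∫ |a| dμ_base < ∞ and (a,h) ↦ a σ(h(x_k)) μ_base-integrable for each k. For κ ≥ 0, let F†_∞(U, μ_base, κ) be the set of functions f : X → ℝ for which there exist a probability measure μ on ℝ × V and a probability measure π on ℝ × V × V such that: the pushforward of π under (a,h,h') ↦ (a,h) is μ_base, the pushforward under (a,h,h') ↦ (a,h') is μ, the set { (a,h,h') : there is u ∈ U with ‖u‖_U ≤ κ and h' = h + ι u } has π-outer measure 1, and for every x ∈ X, (a,h') ↦ a σ(h'(x)) is μ-integrable with f(x) = ∫ a σ(h'(x)) dμ(a,h'). Then R̂(F†_∞(U, μ_base, κ)) ≤ L ā √G_max · κ / √n. -/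

import Mathlib

open MeasureTheory

noncomputable section

/-- The set of signed sums `∑_k τ_k f(x_k)`, `f ∈ 𝒜`, for a fixed sign pattern
`s` (with `true ↦ +1`, `false ↦ -1`). -/
def radSet {X : Type*} (n : ℕ) (x : Fin n → X) (𝒜 : Set (X → ℝ))
    (s : Fin n → Bool) : Set ℝ :=
  {r : ℝ | ∃ f ∈ 𝒜, r = ∑ k : Fin n, (if s k then (1 : ℝ) else -1) * f (x k)}

/-- The empirical Rademacher complexity
`R̂(𝒜) = (1/n) E_τ [ sup_{f ∈ 𝒜} ∑_k τ_k f(x_k) ]`, the expectation over the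
uniform sign vector written as an average over all `2^n` sign patterns. -/
def empRad {X : Type*} (n : ℕ) (x : Fin n → X) (𝒜 : Set (X → ℝ)) : ℝ :=
  (n : ℝ)⁻¹ * ((2 ^ n : ℝ))⁻¹ * ∑ s : Fin n → Bool, sSup (radSet n x 𝒜 s)

end

noncomputable section

/-- Continuous function spaces are equipped with the Borel σ-algebra of their
(compact-open) topology; for a compact domain this is the Borel σ-algebra of
the supremum norm. -/
instance instContinuousMapMeasurableSpace (X : Type*) [TopologicalSpace X] :
    MeasurableSpace C(X, ℝ) := borel C(X, ℝ)

/-!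
Fix a sign pattern `τ` and write `f_base(x) = ∫ a σ(h(x)) dμ_base`. For `f ∈ F†_∞` with coupling
`π`, `∑ τ_k (f - f_base)(x_k) = ∫ ∑ τ_k a (σ(h(x_k) + ⟪u, φ_k⟫) - σ(h(x_k))) dπ`, and the integrand
is at most its supremum over all shifts `t_k = ⟪u, φ_k⟫` with `‖u‖ ≤ κ`, which depends on `(a, h)`
only; integrating it against `μ_base` thus bounds all `f` at once. Averaging over `τ` kills the
`f_base` term, the Ledoux–Talagrand contraction (each neuron is `|a| L`-Lipschitz in its shift)
replaces the supremum by the linear one, `|a| L κ ‖∑ τ_k φ_k‖`, and orthogonality of the signs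
with Cauchy–Schwarz bounds the average of the latter by `|a| L κ √(n G_max)`.
-/

open Finset Bornology

/-- The Rademacher sign `τ = ±1` encoded by a boolean, as in `radSet`. -/
def boolSign (b : Bool) : ℝ := if b then 1 else -1

@[simp] lemma boolSign_true : boolSign true = 1 := rfl

@[simp] lemma boolSign_false : boolSign false = -1 := rfl

lemma boolSign_not (b : Bool) : boolSign (!b) = -boolSign b := by cases b <;> simp

lemma abs_boolSign (b : Bool) : |boolSign b| = 1 := by cases b <;> simp

lemma boolSign_mul_self (b : Bool) : boolSign b * boolSign b = 1 := by cases b <;> simp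

section SignPatterns

variable {n : ℕ}

def flipAt (j : Fin n) : Equiv.Perm (Fin n → Bool) :=
  Function.Involutive.toPerm (fun s => Function.update s j (!s j)) fun s => by
    ext k; by_cases hk : k = j <;> simp [hk]

@[simp] lemma flipAt_apply_self (s : Fin n → Bool) (j : Fin n) : flipAt j s j = !s j := by
  simp [flipAt, Function.Involutive.toPerm]

lemma flipAt_apply_of_ne (s : Fin n → Bool) {j k : Fin n} (h : k ≠ j) : flipAt j s k = s k := by
  simp [flipAt, Function.Involutive.toPerm, h]

lemma sum_eq_zero_of_flipAt_eq_neg (j : Fin n) {g : (Fin n → Bool) → ℝ}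
    (hg : ∀ s, g (flipAt j s) = -g s) : ∑ s, g s = 0 := by
  have h := Equiv.sum_comp (flipAt j) g
  simp only [hg, sum_neg_distrib] at h
  linarith

lemma sum_boolSign (j : Fin n) : ∑ s : Fin n → Bool, boolSign (s j) = 0 :=
  sum_eq_zero_of_flipAt_eq_neg j fun s => by simp [boolSign_not]

lemma sum_sum_boolSign_mul (c : Fin n → ℝ) : ∑ s : Fin n → Bool, ∑ k, boolSign (s k) * c k = 0 := by
  rw [sum_comm]
  exact sum_eq_zero fun k _ => by rw [← sum_mul, sum_boolSign, zero_mul]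

lemma sum_boolSign_mul_boolSign (j k : Fin n) :
    ∑ s : Fin n → Bool, boolSign (s j) * boolSign (s k) = if j = k then 2 ^ n else 0 := by
  split_ifs with hjk
  · simp [hjk, boolSign_mul_self]
  · exact sum_eq_zero_of_flipAt_eq_neg k fun s => by
      rw [flipAt_apply_of_ne s hjk, flipAt_apply_self, boolSign_not, mul_neg]

variable {E : Type*} [NormedAddCommGroup E] [InnerProductSpace ℝ E]

lemma sum_norm_sq_sum_boolSign_smul (v : Fin n → E) :
    ∑ s : Fin n → Bool, ‖∑ k, boolSign (s k) • v k‖ ^ 2 = 2 ^ n * ∑ k, ‖v k‖ ^ 2 := by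
  have expand : ∀ s : Fin n → Bool, ‖∑ k, boolSign (s k) • v k‖ ^ 2
      = ∑ j, ∑ k, boolSign (s j) * boolSign (s k) * inner ℝ (v j) (v k) := fun s => by
    rw [← real_inner_self_eq_norm_sq, sum_inner]
    simp_rw [inner_sum, real_inner_smul_left, real_inner_smul_right, mul_assoc]
  -- only the diagonal survives, since `∑ s, τ_j τ_k = 2 ^ n δ_jk`
  simp_rw [expand]
  rw [sum_comm]
  simp_rw [sum_comm (γ := Fin n → Bool) (s := univ), ← sum_mul, sum_boolSign_mul_boolSign, ite_mul,
    zero_mul, sum_ite_eq, mem_univ, if_true, real_inner_self_eq_norm_sq, mul_sum]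

lemma sum_norm_sum_boolSign_smul_le (v : Fin n → E) :
    ∑ s : Fin n → Bool, ‖∑ k, boolSign (s k) • v k‖ ≤ 2 ^ n * √(∑ k, ‖v k‖ ^ 2) := by
  have hcard : ((univ : Finset (Fin n → Bool)).card : ℝ) = 2 ^ n := by simp
  have hsq := sq_sum_le_card_mul_sum_sq (s := univ)
    (f := fun s : Fin n → Bool => ‖∑ k, boolSign (s k) • v k‖)
  rw [hcard, sum_norm_sq_sum_boolSign_smul, ← mul_assoc, ← pow_two] at hsq
  calc _ ≤ √((2 ^ n) ^ 2 * ∑ k, ‖v k‖ ^ 2) :=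
        Real.le_sqrt_of_sq_le hsq
    _ = _ := by rw [Real.sqrt_mul (by positivity), Real.sqrt_sq (by positivity)]

end SignPatterns

lemma Bornology.IsBounded.bddAbove_image {α : Type*} [PseudoMetricSpace α] [ProperSpace α]
    {K : Set α} (hK : IsBounded K) {f : α → ℝ} (hf : Continuous f) : BddAbove (f '' K) :=
  (hK.isCompact_closure.bddAbove_image hf.continuousOn).mono (Set.image_mono subset_closure)

lemma sSup_image_add_add_sSup_image_sub_le {α : Type*} {K : Set α} (hK : K.Nonempty)
    (A d g : α → ℝ) (M : ℝ) (hd : ∀ p ∈ K, ∀ q ∈ K, d p - d q ≤ M * |g p - g q|)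
    (h₁ : BddAbove ((fun p => A p + M * g p) '' K))
    (h₂ : BddAbove ((fun p => A p - M * g p) '' K)) :
    sSup ((fun p => A p + d p) '' K) + sSup ((fun p => A p - d p) '' K) ≤
      sSup ((fun p => A p + M * g p) '' K) + sSup ((fun p => A p - M * g p) '' K) := by
  set R := sSup ((fun p => A p + M * g p) '' K) + sSup ((fun p => A p - M * g p) '' K)
  have pair : ∀ p ∈ K, ∀ q ∈ K, (A p + d p) + (A q - d q) ≤ R := by
    intro p hp q hq
    have hpq := hd p hp q hq
    rcases le_total (g q) (g p) with hg | hg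
    · rw [abs_of_nonneg (sub_nonneg.2 hg)] at hpq
      have := le_csSup h₁ (Set.mem_image_of_mem _ hp)
      have := le_csSup h₂ (Set.mem_image_of_mem _ hq)
      linarith
    · rw [abs_of_nonpos (sub_nonpos.2 hg)] at hpq
      have := le_csSup h₁ (Set.mem_image_of_mem _ hq)
      have := le_csSup h₂ (Set.mem_image_of_mem _ hp)
      linarith
  refine le_sub_iff_add_le.1 (csSup_le (hK.image _) ?_)
  rintro _ ⟨p, hp, rfl⟩
  refine le_sub_comm.1 (csSup_le (hK.image _) ?_)
  rintro _ ⟨q, hq, rfl⟩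
  linarith [pair p hp q hq]

section Contraction

variable {n : ℕ} {K : Set (Fin n → ℝ)}

def signedSup (K : Set (Fin n → ℝ)) (c : Fin n → ℝ → ℝ) (s : Fin n → Bool) : ℝ :=
  sSup ((fun t => ∑ k, boolSign (s k) * c k (t k)) '' K)

lemma signedSup_add_signedSup_flipAt_le (hK : IsBounded K) (hKne : K.Nonempty)
    {c : Fin n → ℝ → ℝ} (hc : ∀ k, Continuous (c k)) {j : Fin n} {M : NNReal}
    (hj : LipschitzWith M (c j)) (s : Fin n → Bool) :
    signedSup K c s + signedSup K c (flipAt j s) ≤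
      signedSup K (Function.update c j fun u => M * u) s +
        signedSup K (Function.update c j fun u => M * u) (flipAt j s) := by
  -- `s` and `flipAt j s` share every term but the `j`-th, which changes sign
  set A : (Fin n → ℝ) → ℝ := fun t => ∑ k ∈ univ.erase j, boolSign (s k) * c k (t k)
  have split : ∀ (s' : Fin n → Bool) (c' : Fin n → ℝ → ℝ), (∀ k ≠ j, s' k = s k ∧ c' k = c k) →
      (fun t => ∑ k, boolSign (s' k) * c' k (t k)) =
        fun t => A t + boolSign (s' j) * c' j (t j) := by
    intro s' c' hsc
    funext t
    rw [← add_sum_erase _ _ (mem_univ j), add_comm]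
    congr 1
    refine sum_congr rfl fun k hk => ?_
    obtain ⟨hs, hc⟩ := hsc k (ne_of_mem_erase hk)
    rw [hs, hc]
  unfold signedSup
  rw [split s c fun k _ => ⟨rfl, rfl⟩,
    split (flipAt j s) c fun k hk => ⟨flipAt_apply_of_ne s hk, rfl⟩,
    split s _ fun k hk => ⟨rfl, Function.update_of_ne hk _ _⟩,
    split (flipAt j s) _ fun k hk => ⟨flipAt_apply_of_ne s hk, Function.update_of_ne hk _ _⟩]
  simp only [flipAt_apply_self, boolSign_not, Function.update_self, neg_mul, ← sub_eq_add_neg,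
    mul_left_comm (boolSign (s j)) (M : ℝ)]
  refine sSup_image_add_add_sSup_image_sub_le hKne A _ _ M (fun p _ q _ => ?_)
    (hK.bddAbove_image <| by fun_prop) (hK.bddAbove_image <| by fun_prop)
  have hlip : |c j (p j) - c j (q j)| ≤ M * |p j - q j| := by
    simpa only [Real.dist_eq] using hj.dist_le_mul (p j) (q j)
  calc boolSign (s j) * c j (p j) - boolSign (s j) * c j (q j)
      ≤ |boolSign (s j) * c j (p j) - boolSign (s j) * c j (q j)| := le_abs_self _
    _ ≤ M * |boolSign (s j) * p j - boolSign (s j) * q j| := by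
      simpa only [← mul_sub, abs_mul, abs_boolSign, one_mul] using hlip

lemma sum_signedSup_le_sum_signedSup_update (hK : IsBounded K) (hKne : K.Nonempty)
    {c : Fin n → ℝ → ℝ} (hc : ∀ k, Continuous (c k)) {j : Fin n} {M : NNReal}
    (hj : LipschitzWith M (c j)) :
    ∑ s, signedSup K c s ≤ ∑ s, signedSup K (Function.update c j fun u => M * u) s := by
  have h := sum_le_sum fun s (_ : s ∈ univ) => signedSup_add_signedSup_flipAt_le hK hKne hc hj s
  rw [sum_add_distrib, sum_add_distrib, Equiv.sum_comp (flipAt j) (signedSup K c),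
    Equiv.sum_comp (flipAt j)] at h
  linarith

/-- The Ledoux–Talagrand contraction principle for Rademacher sums over a bounded set. -/
theorem sum_signedSup_le_of_lipschitzWith (hK : IsBounded K) (hKne : K.Nonempty)
    {c : Fin n → ℝ → ℝ} {M : NNReal} (hc : ∀ k, LipschitzWith M (c k)) :
    ∑ s, signedSup K c s ≤ ∑ s, signedSup K (fun _ u => M * u) s := by
  classical
  have hlin : LipschitzWith M fun u : ℝ => M * u := LipschitzWith.of_dist_le_mul fun u v => by
    rw [Real.dist_eq, Real.dist_eq, ← mul_sub, abs_mul, NNReal.abs_eq]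
  suffices ∀ S : Finset (Fin n), ∑ s, signedSup K c s ≤
      ∑ s, signedSup K (fun k => if k ∈ S then fun u : ℝ => M * u else c k) s by
    simpa using this univ
  intro S
  induction S using Finset.induction_on with
  | empty => simp
  | insert j S hj ih =>
    have hupd : (fun k => if k ∈ insert j S then fun u : ℝ => M * u else c k) =
        Function.update (fun k => if k ∈ S then fun u : ℝ => M * u else c k) j fun u => M * u := by
      funext k
      by_cases hk : k = j <;> simp [hk]
    rw [hupd]
    refine ih.trans (sum_signedSup_le_sum_signedSup_update hK hKne (fun k => ?_)
      (by simpa [hj] using hc j))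
    split_ifs
    exacts [hlin.continuous, (hc k).continuous]

end Contraction

section Perturbation

variable {n : ℕ} {K : Set (Fin n → ℝ)} {σ : ℝ → ℝ}

/-- The largest signed gain of the neurons `a σ(b_k)` when their preactivations move by some
`t ∈ K`; under a coupling it dominates the change of `∑ τ_k f(x_k)` pointwise. -/
def perturbSup (σ : ℝ → ℝ) (K : Set (Fin n → ℝ)) (s : Fin n → Bool) (a : ℝ) (b : Fin n → ℝ) : ℝ :=
  signedSup K (fun k u => a * (σ (b k + u) - σ (b k))) s

lemma le_perturbSup (hK : IsBounded K) (hσ : Continuous σ) (s : Fin n → Bool) (a : ℝ)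
    (b : Fin n → ℝ) {t : Fin n → ℝ} (ht : t ∈ K) :
    ∑ k, boolSign (s k) * (a * (σ (b k + t k) - σ (b k))) ≤ perturbSup σ K s a b :=
  le_csSup (hK.bddAbove_image (by fun_prop)) (Set.mem_image_of_mem _ ht)

lemma perturbSup_le {L : NNReal} (hσ : LipschitzWith L σ) (hKne : K.Nonempty) {C : ℝ}
    (hC : ∀ t ∈ K, ‖t‖ ≤ C) (s : Fin n → Bool) (a : ℝ) (b : Fin n → ℝ) :
    perturbSup σ K s a b ≤ n * (L * C) * |a| := by
  refine csSup_le (hKne.image _) ?_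
  rintro _ ⟨t, ht, rfl⟩
  calc ∑ k, boolSign (s k) * (a * (σ (b k + t k) - σ (b k)))
      ≤ ∑ _k : Fin n, L * C * |a| := sum_le_sum fun k _ => ?_
    _ = n * (L * C) * |a| := by simp [mul_assoc]
  have hσk : |σ (b k + t k) - σ (b k)| ≤ L * C := by
    have := hσ.dist_le_mul (b k + t k) (b k)
    rw [Real.dist_eq, Real.dist_eq, add_sub_cancel_left] at this
    exact this.trans (by gcongr; exact (norm_le_pi_norm t k).trans (hC t ht))
  calc boolSign (s k) * (a * (σ (b k + t k) - σ (b k)))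
      ≤ |boolSign (s k) * (a * (σ (b k + t k) - σ (b k)))| := le_abs_self _
    _ ≤ L * C * |a| := by
      rw [abs_mul, abs_boolSign, one_mul, abs_mul, mul_comm]
      gcongr

lemma measurable_perturbSup (hK : IsBounded K) (hσ : Continuous σ) (s : Fin n → Bool) :
    Measurable fun p : ℝ × (Fin n → ℝ) => perturbSup σ K s p.1 p.2 := by
  simp only [perturbSup, signedSup, sSup_image']
  refine LowerSemicontinuous.measurable (lowerSemicontinuous_ciSup (fun p => ?_)
    fun t => Continuous.lowerSemicontinuous (by fun_prop))
  have := hK.bddAbove_image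
    (f := fun t => ∑ k, boolSign (s k) * (p.1 * (σ (p.2 k + t k) - σ (p.2 k)))) (by fun_prop)
  rwa [Set.image_eq_range] at this

lemma integrable_perturbSup {Ω : Type*} [MeasurableSpace Ω] {μ : Measure Ω} {L : NNReal}
    (hσ : LipschitzWith L σ) (hK : IsBounded K) (h0 : 0 ∈ K) (s : Fin n → Bool)
    {a : Ω → ℝ} {b : Ω → Fin n → ℝ} (ha : Integrable a μ) (hb : AEMeasurable b μ) :
    Integrable (fun ω => perturbSup σ K s (a ω) (b ω)) μ := by
  obtain ⟨C, hC⟩ := hK.exists_norm_le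
  refine (ha.abs.const_mul (n * (L * C))).mono'
    ((measurable_perturbSup hK hσ.continuous s).comp_aemeasurable
      (ha.aemeasurable.prodMk hb)).aestronglyMeasurable (ae_of_all _ fun ω => ?_)
  rw [Real.norm_eq_abs, abs_of_nonneg (by simpa using le_perturbSup hK hσ.continuous s _ _ h0)]
  exact perturbSup_le hσ ⟨0, h0⟩ hC s _ _

end Perturbation

section EvalBall

variable {U : Type*} [NormedAddCommGroup U] [InnerProductSpace ℝ U] {n : ℕ} {φ : Fin n → U}
  {κ : ℝ}

/-- When `(ι u)(x_k) = ⟪u, φ_k⟫`, the possible values `((ι u)(x_k))_k` of a shift `ι u` with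
`‖u‖ ≤ κ`. -/
def evalBall (φ : Fin n → U) (κ : ℝ) : Set (Fin n → ℝ) :=
  (fun v k => inner ℝ v (φ k)) '' Metric.closedBall 0 κ

lemma isBounded_evalBall : IsBounded (evalBall φ κ) :=
  (ContinuousLinearMap.pi fun k => innerSLFlip ℝ (φ k)).lipschitz.isBounded_image
    Metric.isBounded_closedBall

lemma zero_mem_evalBall (hκ : 0 ≤ κ) : 0 ∈ evalBall φ κ :=
  ⟨0, Metric.mem_closedBall_self hκ, funext fun _ => inner_zero_left _⟩

lemma signedSup_evalBall_le (hκ : 0 ≤ κ) {M : ℝ} (hM : 0 ≤ M) (s : Fin n → Bool) :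
    signedSup (evalBall φ κ) (fun _ u => M * u) s ≤ M * κ * ‖∑ k, boolSign (s k) • φ k‖ := by
  refine csSup_le (Set.Nonempty.image _ ⟨0, zero_mem_evalBall hκ⟩) ?_
  rintro _ ⟨_, ⟨v, hv, rfl⟩, rfl⟩
  rw [mem_closedBall_zero_iff] at hv
  calc ∑ k, boolSign (s k) * (M * inner ℝ v (φ k))
      = M * inner ℝ v (∑ k, boolSign (s k) • φ k) := by
        simp_rw [inner_sum, real_inner_smul_right, mul_sum, mul_left_comm]
    _ ≤ M * (‖v‖ * ‖∑ k, boolSign (s k) • φ k‖) := by gcongr; exact real_inner_le_norm _ _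
    _ ≤ M * κ * ‖∑ k, boolSign (s k) • φ k‖ := by rw [mul_assoc]; gcongr

lemma sum_perturbSup_evalBall_le {σ : ℝ → ℝ} {L : NNReal} (hσ : LipschitzWith L σ) (hκ : 0 ≤ κ)
    (a : ℝ) (b : Fin n → ℝ) :
    ∑ s, perturbSup σ (evalBall φ κ) s a b ≤ |a| * L * κ * (2 ^ n * √(∑ k, ‖φ k‖ ^ 2)) := by
  have hc : ∀ k, LipschitzWith (‖a‖₊ * L) fun u => a * (σ (b k + u) - σ (b k)) := fun k =>
    LipschitzWith.of_dist_le_mul fun u v => by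
      rw [Real.dist_eq, ← mul_sub, sub_sub_sub_cancel_right, abs_mul, NNReal.coe_mul, coe_nnnorm,
        Real.norm_eq_abs, mul_assoc]
      gcongr
      simpa [Real.dist_eq] using hσ.dist_le_mul (b k + u) (b k + v)
  calc ∑ s, perturbSup σ (evalBall φ κ) s a b
      ≤ ∑ s, signedSup (evalBall φ κ) (fun _ u => (‖a‖₊ * L : NNReal) * u) s :=
        sum_signedSup_le_of_lipschitzWith isBounded_evalBall ⟨0, zero_mem_evalBall hκ⟩ hc
    _ ≤ ∑ s : Fin n → Bool, |a| * L * κ * ‖∑ k, boolSign (s k) • φ k‖ :=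
        sum_le_sum fun s _ => by simpa using signedSup_evalBall_le hκ (by positivity) s
    _ ≤ |a| * L * κ * (2 ^ n * √(∑ k, ‖φ k‖ ^ 2)) := by
        rw [← mul_sum]
        gcongr
        exact sum_norm_sum_boolSign_smul_le φ

lemma sum_integral_perturbSup_evalBall_le {Ω : Type*} [MeasurableSpace Ω] {μ : Measure Ω}
    {σ : ℝ → ℝ} {L : NNReal} (hσ : LipschitzWith L σ) (hκ : 0 ≤ κ) {a : Ω → ℝ}
    {b : Ω → Fin n → ℝ} (ha : Integrable a μ) (hb : AEMeasurable b μ) :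
    ∑ s, ∫ ω, perturbSup σ (evalBall φ κ) s (a ω) (b ω) ∂μ ≤
      L * κ * (2 ^ n * √(∑ k, ‖φ k‖ ^ 2)) * ∫ ω, |a ω| ∂μ := by
  have hint := fun s =>
    integrable_perturbSup hσ (isBounded_evalBall (φ := φ)) (zero_mem_evalBall hκ) s ha hb
  rw [← integral_finsetSum _ fun s _ => hint s, ← integral_const_mul]
  refine integral_mono (integrable_finsetSum _ fun s _ => hint s) (ha.abs.const_mul _) fun ω => ?_
  simpa [mul_comm, mul_left_comm, mul_assoc] using
    sum_perturbSup_evalBall_le (φ := φ) hσ hκ (a ω) (b ω)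

end EvalBall

theorem integral_map_sub_integral_map_le {Ω Y : Type*} [MeasurableSpace Ω] [MeasurableSpace Y]
    {π : Measure Ω} {p q : Ω → Y} (hp : AEMeasurable p π) (hq : AEMeasurable q π) {g Φ : Y → ℝ}
    (hgp : Integrable g (π.map p)) (hgq : Integrable g (π.map q)) (hΦ : Integrable Φ (π.map p))
    (h : ∀ᵐ ω ∂π, g (q ω) - g (p ω) ≤ Φ (p ω)) :
    ∫ y, g y ∂π.map q - ∫ y, g y ∂π.map p ≤ ∫ y, Φ y ∂π.map p := by
  have hgq' : Integrable (fun ω => g (q ω)) π := (integrable_map_measure hgq.1 hq).1 hgq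
  have hgp' : Integrable (fun ω => g (p ω)) π := (integrable_map_measure hgp.1 hp).1 hgp
  rw [integral_map hq hgq.1, integral_map hp hgp.1, integral_map hp hΦ.1, ← integral_sub hgq' hgp']
  exact integral_mono_ae (hgq'.sub hgp') ((integrable_map_measure hΦ.1 hp).1 hΦ) h

instance instContinuousMapBorelSpace (X : Type*) [TopologicalSpace X] : BorelSpace C(X, ℝ) :=
  ⟨rfl⟩

theorem sum_boolSign_mul_integral_le_of_coupling {X U : Type*} [TopologicalSpace X]
    [NormedAddCommGroup U] [InnerProductSpace ℝ U] {n : ℕ} {ι : U →ₗ[ℝ] C(X, ℝ)} {x : Fin n → X}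
    {φ : Fin n → U} (hev : ∀ (u : U) (k : Fin n), ι u (x k) = inner ℝ u (φ k)) {σ : ℝ → ℝ}
    (hσ : Continuous σ) {κ : ℝ} {μ μbase : Measure (ℝ × C(X, ℝ))}
    {π : Measure (ℝ × C(X, ℝ) × C(X, ℝ))} [IsProbabilityMeasure π]
    (h₁ : π.map (fun w => (w.1, w.2.1)) = μbase) (h₂ : π.map (fun w => (w.1, w.2.2)) = μ)
    (hS : π {w | ∃ u : U, ‖u‖ ≤ κ ∧ w.2.2 = w.2.1 + ι u} = 1)
    (hμ : ∀ k, Integrable (fun w : ℝ × C(X, ℝ) => w.1 * σ (w.2 (x k))) μ)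
    (hμbase : ∀ k, Integrable (fun w : ℝ × C(X, ℝ) => w.1 * σ (w.2 (x k))) μbase)
    (s : Fin n → Bool)
    (hΦ : Integrable (fun w : ℝ × C(X, ℝ) => perturbSup σ (evalBall φ κ) s w.1 fun k => w.2 (x k))
      μbase) :
    ∑ k, boolSign (s k) * ∫ w, w.1 * σ (w.2 (x k)) ∂μ ≤
      ∑ k, boolSign (s k) * ∫ w, w.1 * σ (w.2 (x k)) ∂μbase +
        ∫ w, perturbSup σ (evalBall φ κ) s w.1 (fun k => w.2 (x k)) ∂μbase := by
  set g : ℝ × C(X, ℝ) → ℝ := fun w => ∑ k, boolSign (s k) * (w.1 * σ (w.2 (x k)))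
  set Φ : ℝ × C(X, ℝ) → ℝ := fun w => perturbSup σ (evalBall φ κ) s w.1 fun k => w.2 (x k)
  have hg : Measurable g := by fun_prop
  have hΦm : Measurable Φ :=
    (measurable_perturbSup isBounded_evalBall hσ s).comp (measurable_fst.prodMk (by fun_prop))
  have hsplit : ∀ ν : Measure (ℝ × C(X, ℝ)), (∀ k, Integrable (fun w => w.1 * σ (w.2 (x k))) ν) →
      Integrable g ν ∧ ∫ w, g w ∂ν = ∑ k, boolSign (s k) * ∫ w, w.1 * σ (w.2 (x k)) ∂ν :=
    fun ν hν => ⟨integrable_finsetSum _ fun k _ => (hν k).const_mul _, by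
      rw [integral_finsetSum _ fun k _ => (hν k).const_mul _]; simp_rw [integral_const_mul]⟩
  have hp₁ : Measurable fun w : ℝ × C(X, ℝ) × C(X, ℝ) => (w.1, w.2.1) := by fun_prop
  have hp₂ : Measurable fun w : ℝ × C(X, ℝ) × C(X, ℝ) => (w.1, w.2.2) := by fun_prop
  have hae : ∀ᵐ w ∂π, g (w.1, w.2.2) - g (w.1, w.2.1) ≤ Φ (w.1, w.2.1) := by
    refine (ae_iff_measure_eq (measurableSet_le ((hg.comp hp₂).sub (hg.comp hp₁))
      (hΦm.comp hp₁)).nullMeasurableSet).2 ?_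
    rw [measure_univ]
    -- the support set of `π` need not be measurable, but it lies in the set where the bound holds
    refine le_antisymm prob_le_one (hS ▸ measure_mono ?_)
    rintro w ⟨u, hu, hw⟩
    have := le_perturbSup (isBounded_evalBall (φ := φ)) hσ s w.1 (fun k => w.2.1 (x k))
      (t := fun k => inner ℝ u (φ k)) ⟨u, mem_closedBall_zero_iff.2 hu, rfl⟩
    show g (w.1, w.2.2) - g (w.1, w.2.1) ≤ Φ (w.1, w.2.1)
    simp only [g, Φ, hw, ContinuousMap.add_apply, hev, ← sum_sub_distrib]
    convert this using 3 with k
    ring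
  rw [← (hsplit μ hμ).2, ← (hsplit μbase hμbase).2, ← sub_le_iff_le_add']
  subst h₁ h₂
  exact integral_map_sub_integral_map_le hp₁.aemeasurable hp₂.aemeasurable (hsplit _ hμbase).1
    (hsplit _ hμ).1 hΦ hae

lemma empRad_empty {X : Type*} (n : ℕ) (x : Fin n → X) : empRad n x ∅ = 0 := by
  simp [empRad, radSet]

lemma empRad_le_of_forall_le_add {X : Type*} {n : ℕ} {x : Fin n → X} {𝒜 : Set (X → ℝ)}
    (h𝒜 : 𝒜.Nonempty) (c : Fin n → ℝ) (B : (Fin n → Bool) → ℝ)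
    (hB : ∀ s, ∀ f ∈ 𝒜, ∑ k, boolSign (s k) * f (x k) ≤ ∑ k, boolSign (s k) * c k + B s) :
    empRad n x 𝒜 ≤ (n : ℝ)⁻¹ * (2 ^ n)⁻¹ * ∑ s, B s := by
  obtain ⟨f₀, hf₀⟩ := h𝒜
  rw [← zero_add (∑ s, B s), ← sum_sum_boolSign_mul c, ← sum_add_distrib]
  unfold empRad
  gcongr with s
  refine csSup_le ⟨_, f₀, hf₀, rfl⟩ ?_
  rintro _ ⟨f, hf, rfl⟩
  exact hB s f hf

theorem rademacher_transport_class_rkhs_general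
    (X : Type*) [TopologicalSpace X] (n : ℕ) (x : Fin n → X)
    (U : Type*) [NormedAddCommGroup U] [InnerProductSpace ℝ U]
    (ι : U →ₗ[ℝ] C(X, ℝ))
    (φ : Fin n → U)
    (hev : ∀ (u : U) (k : Fin n), (ι u) (x k) = (inner ℝ u (φ k) : ℝ))
    (Gmax : ℝ)
    (hφ : ∀ k : Fin n, (inner ℝ (φ k) (φ k) : ℝ) ≤ Gmax)
    (σ : ℝ → ℝ) (L : NNReal) (hσ_lip : LipschitzWith L σ)
    (μbase : Measure (ℝ × C(X, ℝ)))
    (hInt_a : Integrable (fun w : ℝ × C(X, ℝ) => |w.1|) μbase)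
    (hInt_k : ∀ k : Fin n,
      Integrable (fun w : ℝ × C(X, ℝ) => w.1 * σ (w.2 (x k))) μbase)
    (κ : ℝ) (hκ : 0 ≤ κ)
    -- the transport-based class `F†_∞(U, μ_base, κ)`
    (F : Set (X → ℝ))
    (hF : F = {f : X → ℝ | ∃ μ : Measure (ℝ × C(X, ℝ)),
      ∃ π : Measure (ℝ × C(X, ℝ) × C(X, ℝ)),
      IsProbabilityMeasure μ ∧ IsProbabilityMeasure π ∧
      π.map (fun w : ℝ × C(X, ℝ) × C(X, ℝ) => (w.1, w.2.1)) = μbase ∧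
      π.map (fun w : ℝ × C(X, ℝ) × C(X, ℝ) => (w.1, w.2.2)) = μ ∧
      π {w : ℝ × C(X, ℝ) × C(X, ℝ) |
          ∃ u : U, ‖u‖ ≤ κ ∧ w.2.2 = w.2.1 + ι u} = 1 ∧
      ∀ x' : X, Integrable (fun w : ℝ × C(X, ℝ) => w.1 * σ (w.2 x')) μ ∧
        f x' = ∫ w : ℝ × C(X, ℝ), w.1 * σ (w.2 x') ∂μ}) :
    empRad n x F ≤ (L : ℝ) * (∫ w : ℝ × C(X, ℝ), |w.1| ∂μbase) *
      Real.sqrt Gmax * κ / Real.sqrt n := by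
  set abar := ∫ w : ℝ × C(X, ℝ), |w.1| ∂μbase
  rcases F.eq_empty_or_nonempty with rfl | hFne
  · have : 0 ≤ abar := integral_nonneg fun _ => abs_nonneg _
    rw [empRad_empty]
    positivity
  have ha : Integrable (fun w : ℝ × C(X, ℝ) => w.1) μbase :=
    hInt_a.mono' measurable_fst.aestronglyMeasurable (ae_of_all _ fun _ => le_rfl)
  have hb : Measurable fun w : ℝ × C(X, ℝ) => fun k => w.2 (x k) := by fun_prop
  have hcoupling : ∀ s, ∀ f ∈ F, ∑ k, boolSign (s k) * f (x k) ≤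
      ∑ k, boolSign (s k) * ∫ w, w.1 * σ (w.2 (x k)) ∂μbase +
        ∫ w, perturbSup σ (evalBall φ κ) s w.1 (fun k => w.2 (x k)) ∂μbase := by
    intro s f hf
    rw [hF] at hf
    obtain ⟨μ, π, -, hπ, h₁, h₂, hS, hfμ⟩ := hf
    simp_rw [(hfμ _).2]
    exact sum_boolSign_mul_integral_le_of_coupling hev hσ_lip.continuous h₁ h₂ hS
      (fun k => (hfμ _).1) hInt_k s
      (integrable_perturbSup hσ_lip isBounded_evalBall (zero_mem_evalBall hκ) s ha hb.aemeasurable)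
  have hφsq : ∑ k, ‖φ k‖ ^ 2 ≤ n * Gmax := by
    simpa [real_inner_self_eq_norm_sq] using sum_le_sum fun k (_ : k ∈ univ) => hφ k
  calc empRad n x F
      ≤ (n : ℝ)⁻¹ * (2 ^ n)⁻¹ *
          ∑ s, ∫ w, perturbSup σ (evalBall φ κ) s w.1 (fun k => w.2 (x k)) ∂μbase :=
        empRad_le_of_forall_le_add hFne _ _ hcoupling
    _ ≤ (n : ℝ)⁻¹ * (2 ^ n)⁻¹ * (L * κ * (2 ^ n * √(n * Gmax)) * abar) := by
        gcongr
        exact (sum_integral_perturbSup_evalBall_le hσ_lip hκ ha hb.aemeasurable).trans (by gcongr)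
    _ = L * abar * √Gmax * κ / √n := by
        rw [Real.sqrt_mul n.cast_nonneg, div_eq_mul_one_div _ √(n : ℝ), ← Real.sqrt_div_self']
        field_simp

/-- Rademacher complexity of the transport-based function
class `F†_∞(U, μ_base, κ)` over an RKHS with kernel bounded by `G_max`. -/
theorem rademacher_transport_class_rkhs
    (X : Type*) [TopologicalSpace X] [CompactSpace X] (n : ℕ) (x : Fin n → X)
    (U : Type*) [NormedAddCommGroup U] [InnerProductSpace ℝ U]
    (ι : U →ₗ[ℝ] C(X, ℝ)) (hι_inj : Function.Injective ι)
    (hι_bdd : ∃ c : ℝ, ∀ u : U, ‖ι u‖ ≤ c * ‖u‖)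
    (φ : Fin n → U)
    (hev : ∀ (u : U) (k : Fin n), (ι u) (x k) = (inner ℝ u (φ k) : ℝ))
    (Gmax : ℝ) (hGmax0 : 0 ≤ Gmax)
    (hφ : ∀ k : Fin n, (inner ℝ (φ k) (φ k) : ℝ) ≤ Gmax)
    (σ : ℝ → ℝ) (L : NNReal) (hσ_lip : LipschitzWith L σ)
    (μbase : Measure (ℝ × C(X, ℝ))) (hμbase : IsProbabilityMeasure μbase)
    (hInt_a : Integrable (fun w : ℝ × C(X, ℝ) => |w.1|) μbase)
    (hInt_k : ∀ k : Fin n,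
      Integrable (fun w : ℝ × C(X, ℝ) => w.1 * σ (w.2 (x k))) μbase)
    (κ : ℝ) (hκ : 0 ≤ κ)
    -- the transport-based class `F†_∞(U, μ_base, κ)`
    (F : Set (X → ℝ))
    (hF : F = {f : X → ℝ | ∃ μ : Measure (ℝ × C(X, ℝ)),
      ∃ π : Measure (ℝ × C(X, ℝ) × C(X, ℝ)),
      IsProbabilityMeasure μ ∧ IsProbabilityMeasure π ∧
      π.map (fun w : ℝ × C(X, ℝ) × C(X, ℝ) => (w.1, w.2.1)) = μbase ∧
      π.map (fun w : ℝ × C(X, ℝ) × C(X, ℝ) => (w.1, w.2.2)) = μ ∧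
      π {w : ℝ × C(X, ℝ) × C(X, ℝ) |
          ∃ u : U, ‖u‖ ≤ κ ∧ w.2.2 = w.2.1 + ι u} = 1 ∧
      ∀ x' : X, Integrable (fun w : ℝ × C(X, ℝ) => w.1 * σ (w.2 x')) μ ∧
        f x' = ∫ w : ℝ × C(X, ℝ), w.1 * σ (w.2 x') ∂μ})
    -- the suprema in the Rademacher complexity are assumed finite
    (hFbdd : ∀ s : Fin n → Bool, BddAbove (radSet n x F s)) :
    empRad n x F ≤ (L : ℝ) * (∫ w : ℝ × C(X, ℝ), |w.1| ∂μbase) *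
      Real.sqrt Gmax * κ / Real.sqrt n :=
  rademacher_transport_class_rkhs_general X n x U ι φ hev Gmax hφ σ L hσ_lip μbase hInt_a hInt_k κ
    hκ F hF

end
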